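/- arXiv:0711.3019 — 4 statements merged into one kernel-verified Lean document; each statement's English description precedes it below -/
import Mathlib

section
/- For the unambiguous discrimination measurement above, if the outcome is conclusive (third coordinate not observed, and measurement in the basis {(1,1,0)/√2, (1,−1,0)/√2, (0,0,1)}), the probability of a conclusive result on input u± is 2 sin² θ, and conditioned on a conclusive result the two states u₊ and u₋ are identified without error (the conclusive outcomes for u₊ and u₋ are orthogonal). -/
open scoped InnerProductSpace

noncomputable def uplus (θ : ℝ) : EuclideanSpace ℂ (Fin 3) :=
  WithLp.toLp 2 ![(Real.cos θ : ℂ), (Real.sin θ : ℂ), 0]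

noncomputable def uminus (θ : ℝ) : EuclideanSpace ℂ (Fin 3) :=
  WithLp.toLp 2 ![(Real.cos θ : ℂ), -(Real.sin θ : ℂ), 0]

noncomputable def vplus (θ : ℝ) : EuclideanSpace ℂ (Fin 3) :=
  WithLp.toLp 2 ![(Real.sin θ : ℂ), (Real.sin θ : ℂ), (Real.sqrt (Real.cos (2 * θ)) : ℂ)]

noncomputable def vminus (θ : ℝ) : EuclideanSpace ℂ (Fin 3) :=
  WithLp.toLp 2 ![(Real.sin θ : ℂ), -(Real.sin θ : ℂ), (Real.sqrt (Real.cos (2 * θ)) : ℂ)]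

/-- conclusive basis vectors e₁' = (1,1,0)/√2, e₂' = (1,−1,0)/√2 -/
noncomputable def econc1 : EuclideanSpace ℂ (Fin 3) :=
  WithLp.toLp 2 ((Real.sqrt 2 : ℂ)⁻¹ • ![(1 : ℂ), 1, 0])

noncomputable def econc2 : EuclideanSpace ℂ (Fin 3) :=
  WithLp.toLp 2 ((Real.sqrt 2 : ℂ)⁻¹ • ![(1 : ℂ), -1, 0])

lemma inner_econc1 (a b c : ℂ) :
    ⟪econc1, (WithLp.toLp 2 ![a, b, c] : EuclideanSpace ℂ (Fin 3))⟫_ℂ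
      = (Real.sqrt 2 : ℂ)⁻¹ * (a + b) := by
  simp only [econc1, PiLp.inner_apply, RCLike.inner_apply, Fin.sum_univ_three, Matrix.smul_cons,
    Matrix.cons_val, map_mul, map_inv₀, Complex.conj_ofReal, smul_eq_mul, map_one, map_zero]
  ring

lemma inner_econc2 (a b c : ℂ) :
    ⟪econc2, (WithLp.toLp 2 ![a, b, c] : EuclideanSpace ℂ (Fin 3))⟫_ℂ
      = (Real.sqrt 2 : ℂ)⁻¹ * (a - b) := by
  simp only [econc2, PiLp.inner_apply, RCLike.inner_apply, Fin.sum_univ_three, Matrix.smul_cons,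
    Matrix.cons_val, map_mul, map_inv₀, Complex.conj_ofReal, smul_eq_mul, map_one, map_neg, map_zero]
  ring

lemma norm_inv_sqrt_two_mul_sq (z : ℂ) :
    ‖(Real.sqrt 2 : ℂ)⁻¹ * z‖ ^ 2 = ‖z‖ ^ 2 / 2 := by
  rw [norm_mul, norm_inv, Complex.norm_real, Real.norm_of_nonneg (Real.sqrt_nonneg 2), mul_pow,
    inv_pow, Real.sq_sqrt zero_le_two]
  ring

lemma conclusive_probability (a b c : ℂ) :
    ‖⟪econc1, (WithLp.toLp 2 ![a, b, c] : EuclideanSpace ℂ (Fin 3))⟫_ℂ‖ ^ 2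
      + ‖⟪econc2, (WithLp.toLp 2 ![a, b, c] : EuclideanSpace ℂ (Fin 3))⟫_ℂ‖ ^ 2
      = ‖a‖ ^ 2 + ‖b‖ ^ 2 := by
  have parallelogram := parallelogram_law_with_norm ℂ a b
  rw [inner_econc1, inner_econc2, norm_inv_sqrt_two_mul_sq, norm_inv_sqrt_two_mul_sq]
  linarith

theorem stmt_2_general (θ : ℝ)
    (U : EuclideanSpace ℂ (Fin 3) ≃ₗᵢ[ℂ] EuclideanSpace ℂ (Fin 3))
    (hUp : U (uplus θ) = vplus θ) (hUm : U (uminus θ) = vminus θ) :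
    ‖⟪econc1, U (uplus θ)⟫_ℂ‖ ^ 2 + ‖⟪econc2, U (uplus θ)⟫_ℂ‖ ^ 2
        = 2 * Real.sin θ ^ 2 ∧
    ‖⟪econc1, U (uminus θ)⟫_ℂ‖ ^ 2 + ‖⟪econc2, U (uminus θ)⟫_ℂ‖ ^ 2
        = 2 * Real.sin θ ^ 2 ∧
    ⟪econc2, U (uplus θ)⟫_ℂ = 0 ∧ ⟪econc1, U (uminus θ)⟫_ℂ = 0 := by
  have norm_sin_sq : ‖(Real.sin θ : ℂ)‖ ^ 2 = Real.sin θ ^ 2 := by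
    rw [Complex.norm_real, Real.norm_eq_abs, sq_abs]
  rw [hUp, hUm, vplus, vminus]
  refine ⟨?_, ?_, ?_, ?_⟩
  · rw [conclusive_probability, norm_sin_sq]
    ring
  · rw [conclusive_probability, norm_neg, norm_sin_sq]
    ring
  · simp [inner_econc2]
  · simp [inner_econc1]

/-- For the unambiguous-discrimination measurement, the probability of a conclusive
result on input u± is 2 sin² θ, and the conclusive outcomes for u₊ and u₋ are
disjoint (error-free discrimination). -/
theorem stmt_2 (θ : ℝ) (hθ : θ ∈ Set.Icc 0 (Real.pi / 4))
    (U : EuclideanSpace ℂ (Fin 3) ≃ₗᵢ[ℂ] EuclideanSpace ℂ (Fin 3))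
    (hUp : U (uplus θ) = vplus θ) (hUm : U (uminus θ) = vminus θ) :
    ‖⟪econc1, U (uplus θ)⟫_ℂ‖ ^ 2 + ‖⟪econc2, U (uplus θ)⟫_ℂ‖ ^ 2
        = 2 * Real.sin θ ^ 2 ∧
    ‖⟪econc1, U (uminus θ)⟫_ℂ‖ ^ 2 + ‖⟪econc2, U (uminus θ)⟫_ℂ‖ ^ 2
        = 2 * Real.sin θ ^ 2 ∧
    ⟪econc2, U (uplus θ)⟫_ℂ = 0 ∧ ⟪econc1, U (uminus θ)⟫_ℂ = 0 :=
  stmt_2_general θ U hUp hUm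
end

section
/- For the φ = 0 interferometer measuring only time-bin t₁ (projections onto |s₁⟩ and |d₁⟩), the state |0_x⟩ gives outcome |d₁⟩ with probability 1/2 and outcome |s₁⟩ with probability 0, while |1_x⟩ gives outcome |s₁⟩ with probability 1/2 and outcome |d₁⟩ with probability 0; hence conditioned on a conclusive click the bit is identified without error. -/
/-!
At the t₁ detectors the two time-bin components interfere: the amplitudes of |0⟩ and |1⟩ are
i/2 and i/2 at d₁, but -1/2 and 1/2 at s₁. So for |0_x⟩ they add at d₁ and cancel at s₁,
and for |1_x⟩ it is the other way round.
-/

open scoped InnerProductSpace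

section LinearMap

variable {E H : Type*} [AddCommGroup E] [Module ℂ E] [NormedAddCommGroup H]
  [InnerProductSpace ℂ H] (T : E →ₗ[ℂ] H) (x : H) (c : ℂ) (u v : E)

lemma inner_map_smul_add_right :
    ⟪x, T (c • (u + v))⟫_ℂ = c * (⟪x, T u⟫_ℂ + ⟪x, T v⟫_ℂ) := by
  rw [map_smul, map_add, inner_smul_right, inner_add_right]

lemma inner_map_smul_sub_right :
    ⟪x, T (c • (u - v))⟫_ℂ = c * (⟪x, T u⟫_ℂ - ⟪x, T v⟫_ℂ) := by
  rw [map_smul, map_sub, inner_smul_right, inner_sub_right]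

end LinearMap

section Amplitudes

variable {H : Type*} [NormedAddCommGroup H] [InnerProductSpace ℂ H] {f : Fin 6 → H}
  (hf : Orthonormal ℂ f) {T : EuclideanSpace ℂ (Fin 2) →ₗ[ℂ] H}
include hf

lemma inner_four_map_single_zero
    (h10 : T (EuclideanSpace.single 0 1) =
      (2 : ℂ)⁻¹ • (f 0 - f 1 + Complex.I • f 3 + Complex.I • f 4)) :
    ⟪f 4, T (EuclideanSpace.single 0 1)⟫_ℂ = Complex.I / 2 := by
  simp only [h10, inner_smul_right, inner_add_right, inner_sub_right, orthonormal_iff_ite.mp hf,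
    Fin.reduceEq, if_true, if_false]
  ring

lemma inner_one_map_single_zero
    (h10 : T (EuclideanSpace.single 0 1) =
      (2 : ℂ)⁻¹ • (f 0 - f 1 + Complex.I • f 3 + Complex.I • f 4)) :
    ⟪f 1, T (EuclideanSpace.single 0 1)⟫_ℂ = -1 / 2 := by
  simp only [h10, inner_smul_right, inner_add_right, inner_sub_right, orthonormal_iff_ite.mp hf,
    Fin.reduceEq, if_true, if_false]
  ring

lemma inner_four_map_single_one
    (h01 : T (EuclideanSpace.single 1 1) =
      (2 : ℂ)⁻¹ • (f 1 - f 2 + Complex.I • f 4 + Complex.I • f 5)) :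
    ⟪f 4, T (EuclideanSpace.single 1 1)⟫_ℂ = Complex.I / 2 := by
  simp only [h01, inner_smul_right, inner_add_right, inner_sub_right, orthonormal_iff_ite.mp hf,
    Fin.reduceEq, if_true, if_false]
  ring

lemma inner_one_map_single_one
    (h01 : T (EuclideanSpace.single 1 1) =
      (2 : ℂ)⁻¹ • (f 1 - f 2 + Complex.I • f 4 + Complex.I • f 5)) :
    ⟪f 1, T (EuclideanSpace.single 1 1)⟫_ℂ = 1 / 2 := by
  simp only [h01, inner_smul_right, inner_add_right, inner_sub_right, orthonormal_iff_ite.mp hf,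
    Fin.reduceEq, if_true, if_false]
  ring

end Amplitudes

/-- For the φ = 0 interferometer measuring only time-bin t₁ (projections onto s₁ = f 1
and d₁ = f 4): |0_x⟩ gives outcome d₁ with probability 1/2 and outcome s₁ with
probability 0, while |1_x⟩ gives outcome s₁ with probability 1/2 and outcome d₁ with
probability 0; hence a conclusive click identifies the bit without error. -/
theorem stmt_9 {H : Type*} [NormedAddCommGroup H] [InnerProductSpace ℂ H]
    (f : Fin 6 → H) (hf : Orthonormal ℂ f)
    (T : EuclideanSpace ℂ (Fin 2) →ₗ[ℂ] H)
    (h10 : T (EuclideanSpace.single 0 1) =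
      (2 : ℂ)⁻¹ • (f 0 - f 1 + Complex.I • f 3 + Complex.I • f 4))
    (h01 : T (EuclideanSpace.single 1 1) =
      (2 : ℂ)⁻¹ • (f 1 - f 2 + Complex.I • f 4 + Complex.I • f 5)) :
    ‖⟪f 4, T ((Real.sqrt 2 : ℂ)⁻¹ •
        (EuclideanSpace.single 0 1 + EuclideanSpace.single 1 1))⟫_ℂ‖ ^ 2 = 1 / 2 ∧
    ⟪f 1, T ((Real.sqrt 2 : ℂ)⁻¹ •
        (EuclideanSpace.single 0 1 + EuclideanSpace.single 1 1))⟫_ℂ = 0 ∧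
    ‖⟪f 1, T ((Real.sqrt 2 : ℂ)⁻¹ •
        (EuclideanSpace.single 0 1 - EuclideanSpace.single 1 1))⟫_ℂ‖ ^ 2 = 1 / 2 ∧
    ⟪f 4, T ((Real.sqrt 2 : ℂ)⁻¹ •
        (EuclideanSpace.single 0 1 - EuclideanSpace.single 1 1))⟫_ℂ = 0 := by
  simp only [inner_map_smul_add_right, inner_map_smul_sub_right,
    inner_four_map_single_zero hf h10, inner_one_map_single_zero hf h10,
    inner_four_map_single_one hf h01, inner_one_map_single_one hf h01,
    norm_inv_sqrt_two_mul_sq]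
  norm_num
end

section
/- Under the Reversed-Space attack, the image of |0⟩_E ⊗ |1_x⟩, where |1_x⟩ = (|0100⟩−|0010⟩)/√2, equals (1/√8)(|E₀⟩−|E₁⟩)(|0100⟩−|0010⟩) + (1/√8)(|E₀⟩+|E₁⟩)(|1000⟩+|0001⟩); consequently, projecting the attacked |0_x⟩ and |1_x⟩ states onto the subspace span{|0100⟩,|0010⟩} of H^P yields Eve-states (|E₀⟩±|E₁⟩)/√2 that are orthogonal. -/
open scoped InnerProductSpace

theorem Real.sqrt_eight : √8 = 2 * √2 := by
  rw [show (8 : ℝ) = 2 ^ 2 * 2 by norm_num, Real.sqrt_mul (by norm_num), Real.sqrt_sq zero_le_two]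

theorem Orthonormal.inner_add_add_sub_sub_eq_zero {𝕜 E : Type*} [RCLike 𝕜]
    [NormedAddCommGroup E] [InnerProductSpace 𝕜 E] {v : Fin 4 → E} (hv : Orthonormal 𝕜 v) :
    ⟪v 0 + v 1 + (v 2 + v 3), v 0 - v 1 - (v 2 - v 3)⟫_𝕜 = 0 := by
  simp [inner_add_left, inner_sub_right, orthonormal_iff_ite.mp hv, hv.1]

/-- Under the Reversed-Space attack, the image of |0⟩_E ⊗ |1_x⟩, where
|1_x⟩ = (|0100⟩−|0010⟩)/√2, equals
(1/√8)(|E₀⟩−|E₁⟩)(|0100⟩−|0010⟩) + (1/√8)(|E₀⟩+|E₁⟩)(|1000⟩+|0001⟩);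
consequently the components of the attacked |0_x⟩ and |1_x⟩ states in
H^E ⊗ span{|0100⟩,|0010⟩} (carrying Eve states (|E₀⟩±|E₁⟩)/√2) are orthogonal.
Here g (i, j) = |E_i⟩ ⊗ |channel_j⟩ with channel basis
(|1000⟩, |0100⟩, |0010⟩, |0001⟩). -/
theorem stmt_12 {H : Type*} [NormedAddCommGroup H] [InnerProductSpace ℂ H]
    (g : Fin 2 × Fin 4 → H) (hg : Orthonormal ℂ g)
    (T : EuclideanSpace ℂ (Fin 2) →ₗ[ℂ] H)
    (h0 : T (EuclideanSpace.single 0 1) =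
      (2 : ℂ)⁻¹ • (g (0, 0) + g (0, 1)) + (2 : ℂ)⁻¹ • (g (1, 2) + g (1, 3)))
    (h1 : T (EuclideanSpace.single 1 1) =
      (2 : ℂ)⁻¹ • (-g (1, 0) + g (1, 1)) + (2 : ℂ)⁻¹ • (g (0, 2) - g (0, 3))) :
    T ((Real.sqrt 2 : ℂ)⁻¹ • (EuclideanSpace.single 0 1 - EuclideanSpace.single 1 1)) =
      (Real.sqrt 8 : ℂ)⁻¹ • ((g (0, 1) - g (0, 2) - (g (1, 1) - g (1, 2)))
        + (g (0, 0) + g (0, 3) + (g (1, 0) + g (1, 3)))) ∧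
    ⟪(Real.sqrt 8 : ℂ)⁻¹ • (g (0, 1) + g (0, 2) + (g (1, 1) + g (1, 2))),
      (Real.sqrt 8 : ℂ)⁻¹ • (g (0, 1) - g (0, 2) - (g (1, 1) - g (1, 2)))⟫_ℂ = 0 := by
  refine ⟨?_, ?_⟩
  · rw [map_smul, map_sub, h0, h1, Real.sqrt_eight, Complex.ofReal_mul, mul_inv]
    module
  · let projectedBasis : Fin 4 → Fin 2 × Fin 4 := ![(0, 1), (0, 2), (1, 1), (1, 2)]
    have hprojectedBasis : Function.Injective projectedBasis := by decide
    have horth := (hg.comp projectedBasis hprojectedBasis).inner_add_add_sub_sub_eq_zero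
    rw [inner_smul_left, inner_smul_right]
    simpa [projectedBasis] using horth
end

section
/- In the Reversed-Space attack, the probability that Bob obtains a conclusive x-basis result on the attacked |0_x⟩ or |1_x⟩ state is 1/2 times the norm squared of the first term, i.e. the total squared amplitude of the component in H^E ⊗ span{|0100⟩,|0010⟩} equals 1/2; the remaining weight 1/2 lies in H^E ⊗ span{|1000⟩,|0001⟩}. -/
open scoped InnerProductSpace

/-!
`T |0⟩` and `T |1⟩` are supported on complementary halves of the orthonormal family `g`, each
with amplitudes `±1/2`. Hence the attacked state `(T |0⟩ ± T |1⟩)/√2` has an amplitude of modulus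
`1/(2√2)` on every one of the eight vectors `g (i, j)`, and any four of them carry weight
`4 · 1/8 = 1/2`.
-/

namespace ReversedSpace

/-- Amplitudes of `T |0⟩` in the basis `g (i, j)`; row `i` is the index of `|E_i⟩`. -/
noncomputable def ampZero (k : Fin 2 × Fin 4) : ℂ := 2⁻¹ * ![![1, 1, 0, 0], ![0, 0, 1, 1]] k.1 k.2

/-- Amplitudes of `T |1⟩` in the basis `g (i, j)`. -/
noncomputable def ampOne (k : Fin 2 × Fin 4) : ℂ := 2⁻¹ * ![![0, 0, 1, -1], ![-1, 1, 0, 0]] k.1 k.2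

lemma norm_ampZero_add_mul_ampOne {s : ℂ} (hs : ‖s‖ = 1) (k : Fin 2 × Fin 4) :
    ‖ampZero k + s * ampOne k‖ = 2⁻¹ := by
  obtain ⟨i, j⟩ := k
  fin_cases i <;> fin_cases j <;> simp [ampZero, ampOne, hs]

variable {H : Type*} [NormedAddCommGroup H] [InnerProductSpace ℂ H] {g : Fin 2 × Fin 4 → H}

lemma sum_ampZero_smul :
    ∑ k, ampZero k • g k = (2 : ℂ)⁻¹ • (g (0, 0) + g (0, 1)) + (2 : ℂ)⁻¹ • (g (1, 2) + g (1, 3)) := by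
  simp [Fintype.sum_prod_type, Fin.sum_univ_four, ampZero, mul_smul]

lemma sum_ampOne_smul :
    ∑ k, ampOne k • g k = (2 : ℂ)⁻¹ • (-g (1, 0) + g (1, 1)) + (2 : ℂ)⁻¹ • (g (0, 2) - g (0, 3)) := by
  simp [Fintype.sum_prod_type, Fin.sum_univ_four, ampOne, mul_smul, add_comm, sub_eq_add_neg]

lemma norm_inner_attacked_sq (hg : Orthonormal ℂ g) {T : EuclideanSpace ℂ (Fin 2) →ₗ[ℂ] H}
    (h0 : T (EuclideanSpace.single 0 1) = ∑ k, ampZero k • g k)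
    (h1 : T (EuclideanSpace.single 1 1) = ∑ k, ampOne k • g k)
    {s : ℂ} (hs : ‖s‖ = 1) (k : Fin 2 × Fin 4) :
    ‖⟪g k, T ((Real.sqrt 2 : ℂ)⁻¹ •
      (EuclideanSpace.single 0 1 + s • EuclideanSpace.single 1 1))⟫_ℂ‖ ^ 2 = 1 / 8 := by
  have hψ : T ((Real.sqrt 2 : ℂ)⁻¹ • (EuclideanSpace.single 0 1 + s • EuclideanSpace.single 1 1))
      = ∑ j, ((Real.sqrt 2 : ℂ)⁻¹ * (ampZero j + s * ampOne j)) • g j := by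
    simp only [map_smul, map_add, h0, h1, Finset.smul_sum, ← Finset.sum_add_distrib, smul_smul,
      ← add_smul, mul_add]
  rw [hψ, hg.inner_right_fintype, norm_mul, norm_ampZero_add_mul_ampOne hs, norm_inv,
    Complex.norm_real, Real.norm_of_nonneg (Real.sqrt_nonneg 2), mul_pow, inv_pow,
    Real.sq_sqrt zero_le_two]
  norm_num

end ReversedSpace

open ReversedSpace in
/-- Here `g (i, j) = |E_i⟩ ⊗ |channel_j⟩` with channel basis
`(|1000⟩, |0100⟩, |0010⟩, |0001⟩)`. -/
theorem stmt_14 {H : Type*} [NormedAddCommGroup H] [InnerProductSpace ℂ H]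
    (g : Fin 2 × Fin 4 → H) (hg : Orthonormal ℂ g)
    (T : EuclideanSpace ℂ (Fin 2) →ₗ[ℂ] H)
    (h0 : T (EuclideanSpace.single 0 1) =
      (2 : ℂ)⁻¹ • (g (0, 0) + g (0, 1)) + (2 : ℂ)⁻¹ • (g (1, 2) + g (1, 3)))
    (h1 : T (EuclideanSpace.single 1 1) =
      (2 : ℂ)⁻¹ • (-g (1, 0) + g (1, 1)) + (2 : ℂ)⁻¹ • (g (0, 2) - g (0, 3))) :
    ∀ ψ : H,
      (ψ = T ((Real.sqrt 2 : ℂ)⁻¹ •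
          (EuclideanSpace.single 0 1 + EuclideanSpace.single 1 1)) ∨
       ψ = T ((Real.sqrt 2 : ℂ)⁻¹ •
          (EuclideanSpace.single 0 1 - EuclideanSpace.single 1 1))) →
      (∑ i : Fin 2, (‖⟪g (i, 1), ψ⟫_ℂ‖ ^ 2
          + ‖⟪g (i, 2), ψ⟫_ℂ‖ ^ 2)) = 1 / 2 ∧
      (∑ i : Fin 2, (‖⟪g (i, 0), ψ⟫_ℂ‖ ^ 2
          + ‖⟪g (i, 3), ψ⟫_ℂ‖ ^ 2)) = 1 / 2 := by
  rw [← sum_ampZero_smul] at h0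
  rw [← sum_ampOne_smul] at h1
  rintro ψ hψ
  obtain ⟨s, hs, rfl⟩ : ∃ s : ℂ, ‖s‖ = 1 ∧ ψ = T ((Real.sqrt 2 : ℂ)⁻¹ •
      (EuclideanSpace.single 0 1 + s • EuclideanSpace.single 1 1)) := by
    rcases hψ with rfl | rfl
    · exact ⟨1, norm_one, by rw [one_smul]⟩
    · exact ⟨-1, by simp, by rw [neg_one_smul, sub_eq_add_neg]⟩
  simp only [norm_inner_attacked_sq hg h0 h1 hs, Fin.sum_univ_two]
  norm_num
end
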